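/- Let x : I × J → ℝ^m be non-degenerate (its set of entries has at least three distinct elements) and not row-constant (i.e., it is not the case that x_{ij} = x_{ij′} for all i ∈ I and j, j′ ∈ J), and let Q(z) := −‖z‖². Then the following four statements are equivalent: (U1) for every weight matrix w, if C_W(Q) ≤ R_W(Q) then C_W(F) ≤ R_W(F) for every function F : ℝ^m → ℝ that is concave on the convex hull of the entries of x; (U2) for every weight matrix w, if C_W(Q) ≤ R_W(Q) then C_W(Q) = E_W(Q); (U3) for every weight matrix w, if C_W(Q) ≤ R_W(Q) then C_W(F) = E_W(F) ≤ R_W(F) for every function F concave on the convex hull of the entries; (UC) x is column-constant, i.e., x_{ij} = x_{i′j} for all i, i′ ∈ I and j ∈ J. Moreover, if x is column-constant then for every weight matrix w and every function F concave on the convex hull of the entries, C_W(F) = E_W(F) ≤ R_W(F), and in particular C_W(Q) ≤ R_W(Q). -/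

import Mathlib

open scoped BigOperators Classical

open scoped RealInnerProductSpace

set_option linter.unusedSectionVars false
set_option maxHeartbeats 4000000

noncomputable section

variable {I J : Type*} [Fintype I] [Fintype J] {m : ℕ}

/-- Row marginal `w_{i·}`. -/
def rowMarg (w : I → J → ℝ) (i : I) : ℝ := ∑ j, w i j

/-- Column marginal `w_{·j}`. -/
def colMarg (w : I → J → ℝ) (j : J) : ℝ := ∑ i, w i j

/-- Row average `r_i`. -/
def rowAvg (x : I → J → EuclideanSpace ℝ (Fin m)) (w : I → J → ℝ) (i : I) :
    EuclideanSpace ℝ (Fin m) := (rowMarg w i)⁻¹ • ∑ j, w i j • x i j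

/-- Column average `c_j`. -/
def colAvg (x : I → J → EuclideanSpace ℝ (Fin m)) (w : I → J → ℝ) (j : J) :
    EuclideanSpace ℝ (Fin m) := (colMarg w j)⁻¹ • ∑ i, w i j • x i j

/-- `E_W(F)`, the overall weighted average of `F` on the entries. -/
def EW (x : I → J → EuclideanSpace ℝ (Fin m)) (w : I → J → ℝ)
    (F : EuclideanSpace ℝ (Fin m) → ℝ) : ℝ := ∑ i, ∑ j, w i j * F (x i j)

/-- `R_W(F)`, the weighted average of `F` on the row averages. -/
def RW (x : I → J → EuclideanSpace ℝ (Fin m)) (w : I → J → ℝ)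
    (F : EuclideanSpace ℝ (Fin m) → ℝ) : ℝ :=
  ∑ i ∈ Finset.univ.filter (fun i => 0 < rowMarg w i), rowMarg w i * F (rowAvg x w i)

/-- `C_W(F)`, the weighted average of `F` on the column averages. -/
def CW (x : I → J → EuclideanSpace ℝ (Fin m)) (w : I → J → ℝ)
    (F : EuclideanSpace ℝ (Fin m) → ℝ) : ℝ :=
  ∑ j ∈ Finset.univ.filter (fun j => 0 < colMarg w j), colMarg w j * F (colAvg x w j)

/-- `w` is a weight matrix. -/
def IsWeight (w : I → J → ℝ) : Prop := (∀ i j, 0 ≤ w i j) ∧ ∑ i, ∑ j, w i j = 1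

/-- The set of entries of the matrix `x`. -/
def entries (x : I → J → EuclideanSpace ℝ (Fin m)) : Set (EuclideanSpace ℝ (Fin m)) :=
  {v | ∃ i j, x i j = v}

/-- `x` is `W`-column-constant. -/
def WColConst (x : I → J → EuclideanSpace ℝ (Fin m)) (w : I → J → ℝ) : Prop :=
  ∀ i i' j, 0 < w i j → 0 < w i' j → x i j = x i' j

/-- `x` is `W`-row-constant. -/
def WRowConst (x : I → J → EuclideanSpace ℝ (Fin m)) (w : I → J → ℝ) : Prop :=
  ∀ i j j', 0 < w i j → 0 < w i j' → x i j = x i j'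

-- ===== auxiliary lemmas =====

lemma colMarg_nonneg {w : I → J → ℝ} (hw : ∀ i j, 0 ≤ w i j) (j : J) : 0 ≤ colMarg w j :=
  Finset.sum_nonneg fun i _ => hw i j

lemma w_eq_zero_of_colMarg {w : I → J → ℝ} (hw : ∀ i j, 0 ≤ w i j) {j : J}
    (h : ¬ 0 < colMarg w j) (i : I) : w i j = 0 := by
  have h0 : colMarg w j = 0 := le_antisymm (not_lt.1 h) (colMarg_nonneg hw j)
  have := (Finset.sum_eq_zero_iff_of_nonneg (fun i _ => hw i j)).1 h0
  exact this i (Finset.mem_univ i)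

lemma EW_col (x : I → J → EuclideanSpace ℝ (Fin m)) (w : I → J → ℝ)
    (F : EuclideanSpace ℝ (Fin m) → ℝ) : EW x w F = ∑ j, ∑ i, w i j * F (x i j) :=
  Finset.sum_comm

lemma EW_col_filter {x : I → J → EuclideanSpace ℝ (Fin m)} {w : I → J → ℝ}
    (hw : ∀ i j, 0 ≤ w i j) (F : EuclideanSpace ℝ (Fin m) → ℝ) :
    EW x w F = ∑ j ∈ Finset.univ.filter (fun j => 0 < colMarg w j), ∑ i, w i j * F (x i j) := by
  rw [EW_col]
  exact (Finset.sum_filter_of_ne (fun j _ hne => by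
    by_contra h
    exact hne (Finset.sum_eq_zero fun i _ => by rw [w_eq_zero_of_colMarg hw h i, zero_mul]))).symm

lemma smul_colAvg {x : I → J → EuclideanSpace ℝ (Fin m)} {w : I → J → ℝ} {j : J}
    (hj : 0 < colMarg w j) : colMarg w j • colAvg x w j = ∑ i, w i j • x i j := by
  rw [colAvg, smul_smul, mul_inv_cancel₀ hj.ne', one_smul]

lemma col_jensen {x : I → J → EuclideanSpace ℝ (Fin m)} {w : I → J → ℝ}
    (hw : ∀ i j, 0 ≤ w i j) {j : J} (hj : 0 < colMarg w j)
    {F : EuclideanSpace ℝ (Fin m) → ℝ}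
    (hF : ConcaveOn ℝ (convexHull ℝ (entries x)) F) :
    ∑ i, w i j * F (x i j) ≤ colMarg w j * F (colAvg x w j) := by
  have h := hF.le_map_centerMass (t := Finset.univ) (w := fun i => w i j) (p := fun i => x i j)
    (fun i _ => hw i j) hj (fun i _ => subset_convexHull ℝ _ ⟨i, j, rfl⟩)
  have hc : Finset.univ.centerMass (fun i => w i j) (fun i => x i j) = colAvg x w j := rfl
  rw [hc] at h
  have h2 : Finset.univ.centerMass (fun i => w i j) (F ∘ fun i => x i j)
      = (colMarg w j)⁻¹ * ∑ i, w i j * F (x i j) := by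
    simp [Finset.centerMass, colMarg, smul_eq_mul]
  rw [h2] at h
  calc ∑ i, w i j * F (x i j) = colMarg w j * ((colMarg w j)⁻¹ * ∑ i, w i j * F (x i j)) := by
        rw [← mul_assoc, mul_inv_cancel₀ hj.ne', one_mul]
    _ ≤ colMarg w j * F (colAvg x w j) := by
        exact mul_le_mul_of_nonneg_left h hj.le

lemma EW_le_CW {x : I → J → EuclideanSpace ℝ (Fin m)} {w : I → J → ℝ}
    (hw : ∀ i j, 0 ≤ w i j) {F : EuclideanSpace ℝ (Fin m) → ℝ}
    (hF : ConcaveOn ℝ (convexHull ℝ (entries x)) F) : EW x w F ≤ CW x w F := by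
  rw [EW_col_filter hw F]
  apply Finset.sum_le_sum
  intro j hj
  exact col_jensen hw (Finset.mem_filter.1 hj).2 hF

/-- Per-column variance identity for `Q`. -/
lemma col_gap_Q {x : I → J → EuclideanSpace ℝ (Fin m)} {w : I → J → ℝ} {j : J}
    (hj : 0 < colMarg w j) :
    colMarg w j * (-‖colAvg x w j‖^2) - ∑ i, w i j * (-‖x i j‖^2)
      = ∑ i, w i j * ‖x i j - colAvg x w j‖^2 := by
  set c := colAvg x w j with hc
  set M := colMarg w j with hM
  have hsum : ∑ i, w i j • x i j = M • c := (smul_colAvg hj).symm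
  have hMsum : ∑ i, w i j = M := rfl
  have expand : ∀ i ∈ Finset.univ, w i j * ‖x i j - c‖^2
      = (w i j * ‖x i j‖^2 - 2 * (inner ℝ (w i j • x i j) c : ℝ)) + w i j * ‖c‖^2 := by
    intro i _
    rw [norm_sub_sq_real, real_inner_smul_left]
    ring
  have key : (∑ i, (inner ℝ (w i j • x i j) c : ℝ)) = M * ‖c‖^2 := by
    rw [← sum_inner, hsum, real_inner_smul_left, real_inner_self_eq_norm_sq]
  rw [Finset.sum_congr rfl expand, Finset.sum_add_distrib, Finset.sum_sub_distrib,
    ← Finset.sum_mul, hMsum]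
  have h2 : (∑ i : I, 2 * (inner ℝ (w i j • x i j) c : ℝ)) = 2 * (M * ‖c‖^2) := by
    rw [← Finset.mul_sum, key]
  rw [h2]
  ring_nf
  rw [show (∑ i : I, -(w i j * ‖x i j‖^2)) = -∑ i : I, w i j * ‖x i j‖^2 from
    Finset.sum_neg_distrib _]
  ring

/-- If `C_W(Q) = E_W(Q)` then `x` is `W`-column-constant. -/
lemma wColConst_of_CW_eq_EW {x : I → J → EuclideanSpace ℝ (Fin m)} {w : I → J → ℝ}
    (hw : ∀ i j, 0 ≤ w i j)
    (h : CW x w (fun z => -‖z‖^2) = EW x w (fun z => -‖z‖^2)) : WColConst x w := by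
  have hz : ∑ j ∈ Finset.univ.filter (fun j => 0 < colMarg w j),
      ∑ i, w i j * ‖x i j - colAvg x w j‖^2 = 0 := by
    have : CW x w (fun z => -‖z‖^2) - EW x w (fun z => -‖z‖^2) = ∑ j ∈ Finset.univ.filter
        (fun j => 0 < colMarg w j), ∑ i, w i j * ‖x i j - colAvg x w j‖^2 := by
      rw [CW, EW_col_filter hw, ← Finset.sum_sub_distrib]
      exact Finset.sum_congr rfl fun j hj => col_gap_Q (Finset.mem_filter.1 hj).2
    rw [← this, h, sub_self]
  have hterm : ∀ j ∈ Finset.univ.filter (fun j => 0 < colMarg w j), ∀ i,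
      w i j * ‖x i j - colAvg x w j‖^2 = 0 := by
    intro j hj i
    have hnn : ∀ j ∈ Finset.univ.filter (fun j => 0 < colMarg w j),
        0 ≤ ∑ i, w i j * ‖x i j - colAvg x w j‖^2 := fun j _ =>
      Finset.sum_nonneg fun i _ => mul_nonneg (hw i j) (sq_nonneg _)
    have := (Finset.sum_eq_zero_iff_of_nonneg hnn).1 hz j hj
    exact (Finset.sum_eq_zero_iff_of_nonneg
      (fun i _ => mul_nonneg (hw i j) (sq_nonneg _))).1 this i (Finset.mem_univ i)
  intro i i' j hi hi'
  have hjpos : 0 < colMarg w j := lt_of_lt_of_le hi (Finset.single_le_sum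
    (fun i _ => hw i j) (Finset.mem_univ i))
  have hjmem : j ∈ Finset.univ.filter (fun j => 0 < colMarg w j) := by
    simp [hjpos]
  have h1 : x i j = colAvg x w j := by
    have := hterm j hjmem i
    rcases mul_eq_zero.1 this with h | h
    · exact absurd h hi.ne'
    · exact sub_eq_zero.1 (by simpa [norm_eq_zero] using pow_eq_zero_iff (n := 2) (by norm_num) |>.1 h)
  have h2 : x i' j = colAvg x w j := by
    have := hterm j hjmem i'
    rcases mul_eq_zero.1 this with h | h
    · exact absurd h hi'.ne'
    · exact sub_eq_zero.1 (by simpa [norm_eq_zero] using pow_eq_zero_iff (n := 2) (by norm_num) |>.1 h)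
  rw [h1, h2]

/-- If `x` is `W`-column-constant then `C_W(F) = E_W(F)` for every `F`. -/
lemma CW_eq_EW_of_wColConst {x : I → J → EuclideanSpace ℝ (Fin m)} {w : I → J → ℝ}
    (hw : ∀ i j, 0 ≤ w i j) (h : WColConst x w) (F : EuclideanSpace ℝ (Fin m) → ℝ) :
    CW x w F = EW x w F := by
  rw [CW, EW_col_filter hw]
  refine Finset.sum_congr rfl fun j hj => ?_
  have hjpos : 0 < colMarg w j := (Finset.mem_filter.1 hj).2
  obtain ⟨i₀, -, hi₀⟩ : ∃ i₀ ∈ Finset.univ, 0 < w i₀ j := by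
    by_contra hcon
    push_neg at hcon
    have : colMarg w j = 0 := Finset.sum_eq_zero fun i hi =>
      le_antisymm (hcon i hi) (hw i j)
    exact absurd this hjpos.ne'
  have havg : colAvg x w j = x i₀ j := by
    rw [colAvg]
    have : ∑ i, w i j • x i j = colMarg w j • x i₀ j := by
      rw [colMarg, Finset.sum_smul]
      refine Finset.sum_congr rfl fun i _ => ?_
      rcases (hw i j).eq_or_lt with h0 | h0
      · rw [← h0, zero_smul, zero_smul]
      · rw [h i i₀ j h0 hi₀]
    rw [this, smul_smul, inv_mul_cancel₀ hjpos.ne', one_smul]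
  rw [havg]
  have : ∀ i ∈ Finset.univ, w i j * F (x i j) = w i j * F (x i₀ j) := by
    intro i _
    rcases (hw i j).eq_or_lt with h0 | h0
    · rw [← h0, zero_mul, zero_mul]
    · rw [h i i₀ j h0 hi₀]
  rw [Finset.sum_congr rfl this, ← Finset.sum_mul, colMarg]

lemma RW_eq_CW_transpose (x : I → J → EuclideanSpace ℝ (Fin m)) (w : I → J → ℝ)
    (F : EuclideanSpace ℝ (Fin m) → ℝ) :
    RW x w F = CW (fun j i => x i j) (fun j i => w i j) F := rfl

lemma EW_eq_EW_transpose (x : I → J → EuclideanSpace ℝ (Fin m)) (w : I → J → ℝ)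
    (F : EuclideanSpace ℝ (Fin m) → ℝ) :
    EW x w F = EW (fun j i => x i j) (fun j i => w i j) F := Finset.sum_comm

lemma entries_transpose (x : I → J → EuclideanSpace ℝ (Fin m)) :
    entries (fun j i => x i j) = entries x := by
  ext v
  exact ⟨fun ⟨j, i, h⟩ => ⟨i, j, h⟩, fun ⟨i, j, h⟩ => ⟨j, i, h⟩⟩

/-- `Q` is concave on the whole space. -/
lemma concave_Q : ConcaveOn ℝ (Set.univ : Set (EuclideanSpace ℝ (Fin m)))
    (fun z => -‖z‖^2) := by
  refine ⟨convex_univ, fun z _ v _ a b ha hb hab => ?_⟩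
  simp only [smul_eq_mul]
  have h1 : ‖a • z + b • v‖^2 = a^2*‖z‖^2 + 2*(a*b*(inner ℝ z v : ℝ)) + b^2*‖v‖^2 := by
    rw [norm_add_sq_real, real_inner_smul_left, real_inner_smul_right, norm_smul, norm_smul,
      Real.norm_eq_abs, Real.norm_eq_abs, abs_of_nonneg ha, abs_of_nonneg hb]
    ring
  have h2 : (inner ℝ z v : ℝ) ≤ ‖z‖*‖v‖ := real_inner_le_norm z v
  nlinarith [sq_nonneg (‖z‖ - ‖v‖), mul_nonneg ha hb, sq_nonneg (a*‖z‖ - b*‖v‖)]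

/-- Concavity of `ζ ↦ -‖L ζ - v₀‖²` for a linear map `L`. -/
lemma concave_negsq_linear (L : EuclideanSpace ℝ (Fin m) →ₗ[ℝ] EuclideanSpace ℝ (Fin m))
    (v₀ : EuclideanSpace ℝ (Fin m)) :
    ConcaveOn ℝ (Set.univ : Set (EuclideanSpace ℝ (Fin m)))
      (fun ζ => -‖L ζ - v₀‖^2) := by
  refine ⟨convex_univ, fun z _ v _ a b ha hb hab => ?_⟩
  have hv : L (a • z + b • v) - v₀ = a • (L z - v₀) + b • (L v - v₀) := by
    have h1 : L (a • z + b • v) - v₀ = a • (L z) + b • (L v) - (a+b) • v₀ := by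
      rw [map_add, map_smul, map_smul, hab, one_smul]
    rw [h1, add_smul, smul_sub, smul_sub]
    abel
  have h2 := concave_Q.2 (Set.mem_univ (L z - v₀)) (Set.mem_univ (L v - v₀)) ha hb hab
  show a • (-‖L z - v₀‖^2) + b • (-‖L v - v₀‖^2) ≤ -‖L (a • z + b • v) - v₀‖^2
  rw [hv]
  exact h2

/-- Concavity of `ζ ↦ min (⟨ζ - v₀, d⟩ * c + q₀) s₀`. -/
lemma concave_min_inner (v₀ d : EuclideanSpace ℝ (Fin m)) (c q₀ s₀ : ℝ) :
    ConcaveOn ℝ (Set.univ : Set (EuclideanSpace ℝ (Fin m)))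
      (fun ζ => min ((inner ℝ (ζ - v₀) d : ℝ) * c + q₀) s₀) := by
  refine ⟨convex_univ, fun z _ v _ a b ha hb hab => ?_⟩
  simp only [smul_eq_mul]
  have hφ : (inner ℝ (a • z + b • v - v₀) d : ℝ) * c + q₀
      = a * ((inner ℝ (z - v₀) d : ℝ) * c + q₀) + b * ((inner ℝ (v - v₀) d : ℝ) * c + q₀) := by
    have hv₀ : a • z + b • v - v₀ = a • (z - v₀) + b • (v - v₀) := by
      have h1 : a • z + b • v - v₀ = a • z + b • v - (a+b) • v₀ := by rw [hab, one_smul]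
      rw [h1, add_smul, smul_sub, smul_sub]
      abel
    rw [hv₀, inner_add_left, real_inner_smul_left, real_inner_smul_left]
    linear_combination (-q₀) * hab
  refine le_min ?_ ?_
  · rw [hφ]
    exact add_le_add
      (mul_le_mul_of_nonneg_left (min_le_left _ _) ha)
      (mul_le_mul_of_nonneg_left (min_le_left _ _) hb)
  · calc a * min ((inner ℝ (z - v₀) d : ℝ) * c + q₀) s₀
          + b * min ((inner ℝ (v - v₀) d : ℝ) * c + q₀) s₀
        ≤ a * s₀ + b * s₀ := add_le_add
          (mul_le_mul_of_nonneg_left (min_le_right _ _) ha)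
          (mul_le_mul_of_nonneg_left (min_le_right _ _) hb)
      _ = s₀ := by rw [← add_mul, hab, one_mul]

/-- Two-point gap identity for `Q`. -/
lemma gap_two_Q (s t : ℝ) (hs : 0 < s) (ht : 0 < t) (u v : EuclideanSpace ℝ (Fin m)) :
    (s+t) * (-‖(s+t)⁻¹ • (s • u + t • v)‖^2)
      = s * (-‖u‖^2) + t * (-‖v‖^2) + (s*t/(s+t)) * ‖u - v‖^2 := by
  have hst : 0 < s + t := by linarith
  have h1 : ‖(s+t)⁻¹ • (s • u + t • v)‖^2 = ((s+t)⁻¹)^2 * ‖s • u + t • v‖^2 := by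
    rw [norm_smul, Real.norm_eq_abs, abs_of_nonneg (inv_nonneg.2 hst.le), mul_pow]
  have h2 : ‖s • u + t • v‖^2 = s^2*‖u‖^2 + 2*(s*t*(inner ℝ u v : ℝ)) + t^2*‖v‖^2 := by
    rw [norm_add_sq_real, real_inner_smul_left, real_inner_smul_right, norm_smul, norm_smul,
      Real.norm_eq_abs, Real.norm_eq_abs, abs_of_nonneg hs.le, abs_of_nonneg ht.le]
    ring
  have h3 : ‖u - v‖^2 = ‖u‖^2 - 2*(inner ℝ u v : ℝ) + ‖v‖^2 := norm_sub_sq_real u v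
  rw [h1, h2, h3]
  field_simp
  ring

lemma Lshape_eval (x : I → J → EuclideanSpace ℝ (Fin m)) {i₁ i₂ : I} {j₁ j₂ : J}
    (hii : i₁ ≠ i₂) (hjj : j₁ ≠ j₂) {α β γ : ℝ}
    (hα : 0 < α) (hβ : 0 < β) (hγ : 0 < γ) (hs : α + β + γ = 1)
    (w : I → J → ℝ)
    (hwdef : w = fun i j => (if i = i₁ ∧ j = j₁ then α else 0) +
        (if i = i₂ ∧ j = j₁ then β else 0) + (if i = i₂ ∧ j = j₂ then γ else 0)) :
    IsWeight w ∧
    (∀ F : EuclideanSpace ℝ (Fin m) → ℝ,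
      RW x w F = α * F (x i₁ j₁)
        + (β+γ) * F ((β+γ)⁻¹ • (β • x i₂ j₁ + γ • x i₂ j₂)) ∧
      CW x w F = (α+β) * F ((α+β)⁻¹ • (α • x i₁ j₁ + β • x i₂ j₁)) + γ * F (x i₂ j₂)) := by
  have hw1 : ∀ j, w i₁ j = if j = j₁ then α else 0 := by
    intro j; simp [hwdef, hii]
  have hw2 : ∀ j, w i₂ j = (if j = j₁ then β else 0) + (if j = j₂ then γ else 0) := by
    intro j; simp [hwdef, hii.symm]
  have hw0 : ∀ i, i ≠ i₁ → i ≠ i₂ → ∀ j, w i j = 0 := by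
    intro i h1 h2 j; simp [hwdef, h1, h2]
  have hwnn : ∀ i j, 0 ≤ w i j := by
    intro i j
    rw [hwdef]
    have := hα.le; have := hβ.le; have := hγ.le
    dsimp only
    split_ifs <;> linarith
  have hrow : ∀ i, rowMarg w i = (if i = i₁ then α else 0) + (if i = i₂ then β + γ else 0) := by
    intro i
    by_cases h1 : i = i₁
    · subst h1
      simp [rowMarg, hw1, hii]
    · by_cases h2 : i = i₂
      · subst h2
        simp [rowMarg, hw2, Ne.symm hii, Finset.sum_add_distrib, hjj, h1]
      · simp [rowMarg, hw0 i h1 h2, h1, h2]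
  have hcol : ∀ j, colMarg w j = (if j = j₁ then α + β else 0) + (if j = j₂ then γ else 0) := by
    intro j
    have : colMarg w j = w i₁ j + w i₂ j := by
      rw [colMarg, ← Finset.sum_subset (Finset.subset_univ {i₁, i₂})]
      · rw [Finset.sum_pair hii]
      · intro i _ hi
        simp only [Finset.mem_insert, Finset.mem_singleton, not_or] at hi
        exact hw0 i hi.1 hi.2 j
    rw [this, hw1, hw2]
    by_cases h1 : j = j₁ <;> by_cases h2 : j = j₂ <;>
      simp [h1, h2, hjj, Ne.symm hjj] <;> ring
  have hbγ : 0 < β + γ := by linarith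
  have hαβ : 0 < α + β := by linarith
  have hfrow : Finset.univ.filter (fun i => 0 < rowMarg w i) = {i₁, i₂} := by
    ext i
    simp only [Finset.mem_filter, Finset.mem_univ, true_and, Finset.mem_insert,
      Finset.mem_singleton, hrow i]
    by_cases h1 : i = i₁ <;> by_cases h2 : i = i₂ <;>
      simp [h1, h2, hii, Ne.symm hii] <;> linarith
  have hfcol : Finset.univ.filter (fun j => 0 < colMarg w j) = {j₁, j₂} := by
    ext j
    simp only [Finset.mem_filter, Finset.mem_univ, true_and, Finset.mem_insert,
      Finset.mem_singleton, hcol j]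
    by_cases h1 : j = j₁ <;> by_cases h2 : j = j₂ <;>
      simp [h1, h2, hjj, Ne.symm hjj] <;> linarith
  have hrM1 : rowMarg w i₁ = α := by simp [hrow, hii]
  have hrM2 : rowMarg w i₂ = β + γ := by simp [hrow, Ne.symm hii]
  have hcM1 : colMarg w j₁ = α + β := by simp [hcol, hjj]
  have hcM2 : colMarg w j₂ = γ := by simp [hcol, Ne.symm hjj]
  have hrA1 : rowAvg x w i₁ = x i₁ j₁ := by
    rw [rowAvg, hrM1]
    have : ∑ j, w i₁ j • x i₁ j = α • x i₁ j₁ := by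
      rw [Finset.sum_congr rfl (fun j _ => by rw [hw1 j, ite_smul, zero_smul])]
      simp
    rw [this, smul_smul, inv_mul_cancel₀ hα.ne', one_smul]
  have hrA2 : rowAvg x w i₂ = (β+γ)⁻¹ • (β • x i₂ j₁ + γ • x i₂ j₂) := by
    rw [rowAvg, hrM2]
    congr 1
    rw [Finset.sum_congr rfl (fun j _ => by rw [hw2 j, add_smul, ite_smul, zero_smul,
      ite_smul, zero_smul]), Finset.sum_add_distrib]
    simp
  have hcA1 : colAvg x w j₁ = (α+β)⁻¹ • (α • x i₁ j₁ + β • x i₂ j₁) := by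
    rw [colAvg, hcM1]
    congr 1
    rw [← Finset.sum_subset (Finset.subset_univ {i₁, i₂})]
    · rw [Finset.sum_pair hii, hw1, hw2]
      simp [hjj]
    · intro i _ hi
      simp only [Finset.mem_insert, Finset.mem_singleton, not_or] at hi
      rw [hw0 i hi.1 hi.2, zero_smul]
  have hcA2 : colAvg x w j₂ = x i₂ j₂ := by
    rw [colAvg, hcM2]
    have : ∑ i, w i j₂ • x i j₂ = γ • x i₂ j₂ := by
      rw [← Finset.sum_subset (Finset.subset_univ {i₁, i₂})]
      · rw [Finset.sum_pair hii, hw1, hw2]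
        simp [Ne.symm hjj]
      · intro i _ hi
        simp only [Finset.mem_insert, Finset.mem_singleton, not_or] at hi
        rw [hw0 i hi.1 hi.2, zero_smul]
    rw [this, smul_smul, inv_mul_cancel₀ hγ.ne', one_smul]
  refine ⟨⟨hwnn, ?_⟩, fun F => ⟨?_, ?_⟩⟩
  · have : ∀ i, ∑ j, w i j = rowMarg w i := fun i => rfl
    rw [Finset.sum_congr rfl fun i _ => (this i).trans (hrow i), Finset.sum_add_distrib]
    simp
    linarith
  · rw [RW, hfrow, Finset.sum_pair hii, hrM1, hrM2, hrA1, hrA2]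
  · rw [CW, hfcol, Finset.sum_pair hjj, hcM1, hcM2, hcA1, hcA2]

lemma avg_sub (s t : ℝ) (hst : s + t ≠ 0) (u w : EuclideanSpace ℝ (Fin m)) :
    (s+t)⁻¹ • (s • u + t • w) - w = ((s+t)⁻¹ * s) • (u - w) := by
  have h1 : s • u + t • w - (s+t) • w = s • (u - w) := by
    rw [add_smul, smul_sub]; abel
  calc (s+t)⁻¹ • (s • u + t • w) - w
      = (s+t)⁻¹ • (s • u + t • w) - (s+t)⁻¹ • ((s+t) • w) := by
        rw [smul_smul, inv_mul_cancel₀ hst, one_smul]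
    _ = (s+t)⁻¹ • (s • u + t • w - (s+t) • w) := (smul_sub _ _ _).symm
    _ = _ := by rw [h1, smul_smul]

lemma avg_sub' (s t : ℝ) (hst : s + t ≠ 0) (u w : EuclideanSpace ℝ (Fin m)) :
    (s+t)⁻¹ • (s • u + t • w) - u = ((s+t)⁻¹ * t) • (w - u) := by
  have := avg_sub t s (by rwa [add_comm]) w u
  rw [add_comm t s, add_comm (t • w) (s • u)] at this
  exact this

lemma concave_negsq_proj (v₀ d : EuclideanSpace ℝ (Fin m)) (c : ℝ) :
    ConcaveOn ℝ (Set.univ : Set (EuclideanSpace ℝ (Fin m)))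
      (fun ζ => -‖(ζ - v₀) - ((inner ℝ (ζ - v₀) d : ℝ) * c) • d‖^2) := by
  refine ⟨convex_univ, fun z _ u _ a b ha hb hab => ?_⟩
  have hv₀ : a • z + b • u - v₀ = a • (z - v₀) + b • (u - v₀) := by
    have h1 : a • z + b • u - v₀ = a • z + b • u - (a+b) • v₀ := by rw [hab, one_smul]
    rw [h1, add_smul, smul_sub, smul_sub]
    abel
  have hT : (a • z + b • u - v₀) - ((inner ℝ (a • z + b • u - v₀) d : ℝ) * c) • d
      = a • ((z - v₀) - ((inner ℝ (z - v₀) d : ℝ) * c) • d)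
        + b • ((u - v₀) - ((inner ℝ (u - v₀) d : ℝ) * c) • d) := by
    rw [hv₀, inner_add_left, real_inner_smul_left, real_inner_smul_left]
    module
  have h2 := concave_Q.2 (Set.mem_univ ((z - v₀) - ((inner ℝ (z - v₀) d : ℝ) * c) • d))
    (Set.mem_univ ((u - v₀) - ((inner ℝ (u - v₀) d : ℝ) * c) • d)) ha hb hab
  show a • (-‖_‖^2) + b • (-‖_‖^2) ≤ -‖(a • z + b • u - v₀) - _ • d‖^2
  rw [hT]
  exact h2

lemma EW_le_RW {x : I → J → EuclideanSpace ℝ (Fin m)} {w : I → J → ℝ}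
    (hw : ∀ i j, 0 ≤ w i j) {F : EuclideanSpace ℝ (Fin m) → ℝ}
    (hF : ConcaveOn ℝ (convexHull ℝ (entries x)) F) : EW x w F ≤ RW x w F := by
  rw [EW_eq_EW_transpose, RW_eq_CW_transpose]
  exact EW_le_CW (fun j i => hw i j) (by rwa [entries_transpose])

/-- Combinatorial lemma: a matrix with at least three distinct entries that is
neither row-constant nor column-constant admits a "good L-shape". -/
lemma exists_goodL (x : I → J → EuclideanSpace ℝ (Fin m))
    (hnondeg : ∃ i₁ j₁ i₂ j₂ i₃ j₃,
      x i₁ j₁ ≠ x i₂ j₂ ∧ x i₁ j₁ ≠ x i₃ j₃ ∧ x i₂ j₂ ≠ x i₃ j₃)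
    (hnotrow : ¬ ∀ (i : I) (j j' : J), x i j = x i j')
    (hnotcol : ¬ ∀ (i i' : I) (j : J), x i j = x i' j) :
    ∃ i₁ i₂ j₁ j₂, x i₁ j₁ ≠ x i₂ j₁ ∧ x i₂ j₂ ≠ x i₂ j₁ ∧ x i₁ j₁ ≠ x i₂ j₂ := by
  by_contra hGL
  push_neg at hGL
  push_neg at hnotcol
  obtain ⟨ia, ib, jc, hvy⟩ := hnotcol
  set y := x ia jc with hydef
  set v := x ib jc with hvdef
  have S1a : ∀ i, x i jc ≠ v → ∀ j, x i j ≠ x i jc → x i j = v := by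
    intro i ht j hu
    exact (hGL ib i jc j (fun h => ht h.symm) hu).symm
  have S1b : ∀ i, x i jc ≠ y → ∀ j, x i j ≠ x i jc → x i j = y := by
    intro i ht j hu
    exact (hGL ia i jc j (fun h => ht h.symm) hu).symm
  have R : ∀ i, (x i jc = v ∨ x i jc = y) ∨ (∀ j, x i j = x i jc) := by
    intro i
    by_cases h1 : x i jc = v
    · exact Or.inl (Or.inl h1)
    by_cases h2 : x i jc = y
    · exact Or.inl (Or.inr h2)
    refine Or.inr fun j => ?_
    by_contra hu
    exact hvy ((S1b i h2 j hu).symm.trans (S1a i h1 j hu))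
  have Rvy : ∀ i, (x i jc = v ∨ x i jc = y) → ∀ j, x i j = v ∨ x i j = y := by
    intro i ht j
    rcases ht with ht | ht
    · by_cases hu : x i j = x i jc
      · exact Or.inl (hu.trans ht)
      · exact Or.inr (S1b i (fun h => hvy (ht ▸ h).symm) j hu)
    · by_cases hu : x i j = x i jc
      · exact Or.inr (hu.trans ht)
      · exact Or.inl (S1a i (fun h => hvy (ht ▸ h)) j hu)
  obtain ⟨ic, je, hc1, hc2⟩ : ∃ ic je, x ic je ≠ v ∧ x ic je ≠ y := by
    by_contra hno
    push_neg at hno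
    obtain ⟨a1, b1, a2, b2, a3, b3, h12, h13, h23⟩ := hnondeg
    have p1 : x a1 b1 = v ∨ x a1 b1 = y := by
      by_cases h : x a1 b1 = v
      · exact Or.inl h
      · exact Or.inr (hno _ _ h)
    have p2 : x a2 b2 = v ∨ x a2 b2 = y := by
      by_cases h : x a2 b2 = v
      · exact Or.inl h
      · exact Or.inr (hno _ _ h)
    have p3 : x a3 b3 = v ∨ x a3 b3 = y := by
      by_cases h : x a3 b3 = v
      · exact Or.inl h
      · exact Or.inr (hno _ _ h)
    rcases p1 with h1 | h1 <;> rcases p2 with h2 | h2 <;> rcases p3 with h3 | h3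
    · exact h12 (h1.trans h2.symm)
    · exact h12 (h1.trans h2.symm)
    · exact h13 (h1.trans h3.symm)
    · exact h23 (h2.trans h3.symm)
    · exact h23 (h2.trans h3.symm)
    · exact h13 (h1.trans h3.symm)
    · exact h12 (h1.trans h2.symm)
    · exact h12 (h1.trans h2.symm)
  set c := x ic je with hcdef
  have hrowic : ∀ j, x ic j = c := by
    rcases R ic with hin | hconst
    · rcases Rvy ic hin je with h | h
      · exact absurd h hc1
      · exact absurd h hc2
    · intro j
      rw [hconst j, ← hconst je]
  push_neg at hnotrow
  obtain ⟨i4, j5, j6, hpq⟩ := hnotrow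
  have hi4 : x i4 jc = v ∨ x i4 jc = y := by
    rcases R i4 with h | hconst
    · exact h
    · exact absurd ((hconst j5).trans (hconst j6).symm) hpq
  have hmem := Rvy i4 hi4
  obtain ⟨jv, jy, hjv, hjy⟩ : ∃ jv jy, x i4 jv = v ∧ x i4 jy = y := by
    rcases hmem j5 with h5 | h5 <;> rcases hmem j6 with h6 | h6
    · exact absurd (h5.trans h6.symm) hpq
    · exact ⟨j5, j6, h5, h6⟩
    · exact ⟨j6, j5, h6, h5⟩
    · exact absurd (h5.trans h6.symm) hpq
  have hfin := hGL ic i4 jv jy (by rw [hrowic jv, hjv]; exact hc1)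
    (by rw [hjy, hjv]; exact hvy)
  rw [hrowic jv, hjy] at hfin
  exact hc2 hfin

/-- The key construction: a "good L-shape" yields a weight matrix `w` with
`C_W(Q) ≤ R_W(Q)` together with a concave `F` with `R_W(F) < C_W(F)`. -/
lemma exists_violation (x : I → J → EuclideanSpace ℝ (Fin m)) {i₁ i₂ : I} {j₁ j₂ : J}
    (hyv : x i₁ j₁ ≠ x i₂ j₁) (hzv : x i₂ j₂ ≠ x i₂ j₁) (hyz : x i₁ j₁ ≠ x i₂ j₂) :
    ∃ w, IsWeight w ∧
      CW x w (fun z => -‖z‖^2) ≤ RW x w (fun z => -‖z‖^2) ∧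
      ∃ F, ConcaveOn ℝ (convexHull ℝ (entries x)) F ∧ RW x w F < CW x w F := by
  have hii : i₁ ≠ i₂ := by rintro rfl; exact hyv rfl
  have hjj : j₁ ≠ j₂ := by rintro rfl; exact hzv rfl
  set y := x i₁ j₁ with hy
  set v := x i₂ j₁ with hvdef
  set z := x i₂ j₂ with hzdef
  set d : EuclideanSpace ℝ (Fin m) := z - v with hd
  have hdne : d ≠ 0 := sub_ne_zero.2 hzv
  set Z : ℝ := ‖d‖^2 with hZ
  have hZpos : 0 < Z := pow_pos (norm_pos_iff.2 hdne) 2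
  have hvz : ‖v - z‖^2 = Z := by rw [hZ, hd, norm_sub_rev]
  -- the common packaging step
  have main : ∀ α β γ : ℝ, 0 < α → 0 < β → 0 < γ → α + β + γ = 1 →
      (α*β/(α+β)) * ‖y - v‖^2 ≤ (β*γ/(β+γ)) * ‖v - z‖^2 →
      ∀ F : EuclideanSpace ℝ (Fin m) → ℝ,
        ConcaveOn ℝ (convexHull ℝ (entries x)) F →
        α * F y + (β+γ) * F ((β+γ)⁻¹ • (β • v + γ • z))
          < (α+β) * F ((α+β)⁻¹ • (α • y + β • v)) + γ * F z →
      ∃ w, IsWeight w ∧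
        CW x w (fun z => -‖z‖^2) ≤ RW x w (fun z => -‖z‖^2) ∧
        ∃ F, ConcaveOn ℝ (convexHull ℝ (entries x)) F ∧ RW x w F < CW x w F := by
    intro α β γ hα hβ hγ hs hQcond F hF hFlt
    obtain ⟨hw, heval⟩ := Lshape_eval x hii hjj hα hβ hγ hs _ rfl
    refine ⟨_, hw, ?_, F, hF, ?_⟩
    · obtain ⟨hRWQ, hCWQ⟩ := heval (fun z => -‖z‖^2)
      rw [hRWQ, hCWQ]
      have g1 := gap_two_Q α β hα hβ y v
      have g2 := gap_two_Q β γ hβ hγ v z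
      linarith [g1, g2, hQcond]
    · obtain ⟨hRWF, hCWF⟩ := heval F
      rw [hRWF, hCWF]
      exact hFlt
  by_cases hcol : ∃ σ : ℝ, y - v = σ • d
  · -- collinear case
    obtain ⟨σ, hσ⟩ := hcol
    have hσ0 : σ ≠ 0 := by
      rintro rfl
      exact hyv (by simpa [sub_eq_zero] using hσ)
    have hσ1 : σ ≠ 1 := by
      rintro rfl
      rw [one_smul, hd, sub_left_inj] at hσ
      exact hyz hσ
    have hyvZ : ‖y - v‖^2 = σ^2 * Z := by
      rw [hσ, norm_smul, Real.norm_eq_abs, mul_pow, sq_abs, hZ]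
    have key : ∀ (t : ℝ) (p : EuclideanSpace ℝ (Fin m)), p - v = t • d →
        (inner ℝ (p - v) d : ℝ) * Z⁻¹ = t := by
      intro t p hp
      rw [hp, real_inner_smul_left, real_inner_self_eq_norm_sq, ← hZ, mul_assoc,
        mul_inv_cancel₀ hZpos.ne', mul_one]
    have keyz : (inner ℝ (z - v) d : ℝ) * Z⁻¹ = 1 := key 1 z (by rw [one_smul, hd])
    have keyy : (inner ℝ (y - v) d : ℝ) * Z⁻¹ = σ := key σ y hσ
    -- weights for the cases σ < 0 and σ > 1
    set K : ℝ := 8*(1+σ^2) with hK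
    have hK1 : 1 < K := by nlinarith [sq_nonneg σ]
    have hKpos : 0 < K := by linarith
    rcases lt_trichotomy σ 0 with hσneg | hσzero | hσpos
    · -- case σ < 0
      set α : ℝ := 1/K with hαd
      set β : ℝ := (K-1)/(2*K) with hβd
      have hα : 0 < α := by positivity
      have hβ : 0 < β := div_pos (by linarith) (by linarith)
      have hαβ : 0 < α + β := by linarith
      have hββ : 0 < β + β := by linarith
      have hsum : α + β + β = 1 := by rw [hαd, hβd]; field_simp; ring
      set ν : ℝ := (α+β)⁻¹ * (α*σ) with hν
      have hνneg : ν < 0 :=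
        mul_neg_of_pos_of_neg (by positivity) (mul_neg_of_pos_of_neg hα hσneg)
      set F : EuclideanSpace ℝ (Fin m) → ℝ :=
        fun ζ => min ((inner ℝ (ζ - v) d : ℝ) * Z⁻¹ + -ν) 0 with hF
      have hFconc : ConcaveOn ℝ (convexHull ℝ (entries x)) F :=
        (concave_min_inner v d Z⁻¹ (-ν) 0).subset (Set.subset_univ _) (convex_convexHull ℝ _)
      have hcv : ((α+β)⁻¹ • (α • y + β • v)) - v = ((α+β)⁻¹*(α*σ)) • d := by
        rw [avg_sub α β hαβ.ne' y v, hσ, smul_smul, mul_assoc]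
      have hrv : ((β+β)⁻¹ • (β • v + β • z)) - v = ((β+β)⁻¹*β) • d := by
        rw [avg_sub' β β hββ.ne' v z, ← hd]
      have hFy : F y = σ + -ν := by
        rw [hF]; dsimp only; rw [keyy]
        apply min_eq_left
        have h2 : σ + -ν = σ * (β/(α+β)) := by rw [hν]; field_simp; ring
        rw [h2]
        exact (mul_neg_of_neg_of_pos hσneg (by positivity)).le
      have hFr : F ((β+β)⁻¹ • (β • v + β • z)) = 0 := by
        rw [hF]; dsimp only; rw [key _ _ hrv]
        apply min_eq_right
        have : 0 < (β+β)⁻¹*β := by positivity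
        linarith
      have hFc : F ((α+β)⁻¹ • (α • y + β • v)) = 0 := by
        rw [hF]; dsimp only; rw [key _ _ hcv, ← hν]
        simp
      have hFz : F z = 0 := by
        rw [hF]; dsimp only; rw [keyz]
        apply min_eq_right
        linarith
      refine main α β β hα hβ hβ hsum ?_ F hFconc ?_
      · -- Q-condition
        rw [hyvZ, hvz, hαd, hβd]
        have hp1 : 0 < (1/K)+((K-1)/(2*K)) := by rw [← hαd, ← hβd]; exact hαβ
        have hp2 : 0 < ((K-1)/(2*K))+((K-1)/(2*K)) := by rw [← hβd]; exact hββ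
        have e1 : (1/K)*((K-1)/(2*K))/((1/K)+((K-1)/(2*K))) = (K-1)/(K*(K+1)) := by
          rw [div_eq_div_iff hp1.ne' (by positivity : (0:ℝ) < K*(K+1)).ne']
          field_simp
          ring
        have e2 : ((K-1)/(2*K))*((K-1)/(2*K))/(((K-1)/(2*K))+((K-1)/(2*K)))
            = (K-1)/(4*K) := by
          rw [div_eq_div_iff hp2.ne' (by positivity : (0:ℝ) < 4*K).ne']
          field_simp
          ring
        rw [e1, e2, div_mul_eq_mul_div, div_mul_eq_mul_div,
          div_le_div_iff₀ (by positivity) (by positivity)]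
        have h4 : 4*σ^2 ≤ K + 1 := by nlinarith [sq_nonneg σ]
        nlinarith [mul_nonneg (mul_nonneg (mul_nonneg
          (by linarith : (0:ℝ) ≤ K - 1) hKpos.le) hZpos.le)
          (by linarith : (0:ℝ) ≤ K + 1 - 4*σ^2)]
      · -- strict F-inequality
        rw [hFy, hFr, hFc, hFz]
        have h2 : σ + -ν = σ * (β/(α+β)) := by rw [hν]; field_simp; ring
        have : α * (σ + -ν) < 0 := by
          rw [h2]
          exact mul_neg_of_pos_of_neg hα (mul_neg_of_neg_of_pos hσneg (by positivity))
        nlinarith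
    · exact absurd hσzero hσ0
    · rcases lt_trichotomy σ 1 with hσlt | hσe | hσgt
      · -- case 0 < σ < 1
        set T : ℝ := 3 + σ^2 with hT
        have hTpos : 0 < T := by positivity
        set α : ℝ := 1/T with hαd
        set β : ℝ := 2/T with hβd
        set γ : ℝ := σ^2/T with hγd
        have hα : 0 < α := by positivity
        have hβ : 0 < β := by positivity
        have hγ : 0 < γ := by rw [hγd]; positivity
        have hαβ : 0 < α + β := by linarith
        have hβγ : 0 < β + γ := by linarith
        have hsum : α + β + γ = 1 := by rw [hαd, hβd, hγd]; field_simp; ring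
        set F : EuclideanSpace ℝ (Fin m) → ℝ :=
          fun ζ => min ((inner ℝ (ζ - v) d : ℝ) * Z⁻¹ + 0) (σ/2) with hF
        have hFconc : ConcaveOn ℝ (convexHull ℝ (entries x)) F :=
          (concave_min_inner v d Z⁻¹ 0 (σ/2)).subset (Set.subset_univ _) (convex_convexHull ℝ _)
        have hcv : ((α+β)⁻¹ • (α • y + β • v)) - v = ((α+β)⁻¹*(α*σ)) • d := by
          rw [avg_sub α β hαβ.ne' y v, hσ, smul_smul, mul_assoc]
        have hrv : ((β+γ)⁻¹ • (β • v + γ • z)) - v = ((β+γ)⁻¹*γ) • d := by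
          rw [avg_sub' β γ hβγ.ne' v z, ← hd]
        have hνval : (α+β)⁻¹*(α*σ) = σ/3 := by
          rw [hαd, hβd]
          rw [show (1/T)+(2/T) = 3/T by ring]
          field_simp
        have hμval : (β+γ)⁻¹*γ = σ^2/(2+σ^2) := by
          rw [hβd, hγd]
          rw [show (2/T)+(σ^2/T) = (2+σ^2)/T by ring]
          rw [hT]
          have h2T : (0:ℝ) < 2 + σ^2 := by positivity
          field_simp
        have hFy : F y = σ/2 := by
          rw [hF]; dsimp only; rw [keyy, add_zero]
          exact min_eq_right (by linarith)
        have hFz : F z = σ/2 := by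
          rw [hF]; dsimp only; rw [keyz, add_zero]
          exact min_eq_right (by linarith)
        have hFc : F ((α+β)⁻¹ • (α • y + β • v)) = σ/3 := by
          rw [hF]; dsimp only; rw [key _ _ hcv, add_zero, hνval]
          exact min_eq_left (by linarith)
        have hFr : F ((β+γ)⁻¹ • (β • v + γ • z)) = σ^2/(2+σ^2) := by
          rw [hF]; dsimp only; rw [key _ _ hrv, add_zero, hμval]
          apply min_eq_left
          rw [div_le_div_iff₀ (by positivity) (by norm_num)]
          nlinarith [sq_nonneg (σ - 1)]
        refine main α β γ hα hβ hγ hsum ?_ F hFconc ?_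
        · rw [hyvZ, hvz, hαd, hβd, hγd]
          have e1 : (1/T)*(2/T)/((1/T)+(2/T)) = 2/(3*T) := by
            rw [div_eq_div_iff (by positivity : (0:ℝ) < (1/T)+(2/T)).ne'
              (by positivity : (0:ℝ) < 3*T).ne']
            field_simp
            ring
          have e2 : (2/T)*(σ^2/T)/((2/T)+(σ^2/T)) = 2*σ^2/((2+σ^2)*T) := by
            rw [div_eq_div_iff (by positivity : (0:ℝ) < (2/T)+(σ^2/T)).ne'
              (by positivity : (0:ℝ) < (2+σ^2)*T).ne']
            field_simp
          rw [e1, e2, div_mul_eq_mul_div, div_mul_eq_mul_div,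
            div_le_div_iff₀ (by positivity) (by positivity)]
          nlinarith [mul_nonneg (mul_nonneg (sq_nonneg σ) hZpos.le) hTpos.le,
            mul_nonneg (mul_nonneg (mul_nonneg (sq_nonneg σ) hZpos.le) hTpos.le)
              (by nlinarith : (0:ℝ) ≤ 1 - σ^2)]
        · rw [hFy, hFr, hFc, hFz]
          have hc1 : (α+β) * (σ/3) = α*σ := by
            rw [hαd, hβd]
            field_simp
            ring
          have hc2 : (β+γ) * (σ^2/(2+σ^2)) = γ := by
            rw [hβd, hγd]
            rw [← add_div, div_mul_div_comm]
            rw [div_eq_div_iff (by positivity : (0:ℝ) < T*(2+σ^2)).ne' hTpos.ne']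
            ring
          rw [hc1, hc2]
          have hγσ : γ = σ^2 * α := by rw [hγd, hαd]; field_simp
          rw [hγσ]
          nlinarith [mul_pos (mul_pos hα hσpos)
            (mul_pos (sub_pos.2 hσlt) (sub_pos.2 hσlt))]
      · exact absurd hσe hσ1
      · -- case σ > 1
        set α : ℝ := 1/K with hαd
        set β : ℝ := (K-1)/(2*K) with hβd
        have hα : 0 < α := by positivity
        have hβ : 0 < β := div_pos (by linarith) (by linarith)
        have hαβ : 0 < α + β := by linarith
        have hββ : 0 < β + β := by linarith
        have hsum : α + β + β = 1 := by rw [hαd, hβd]; field_simp; ring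
        set θ : ℝ := (1+σ)/2 with hθ
        have hθ1 : 1 ≤ θ := by rw [hθ]; linarith
        have hθσ : θ < σ := by rw [hθ]; linarith
        set F : EuclideanSpace ℝ (Fin m) → ℝ :=
          fun ζ => min ((inner ℝ (ζ - v) d : ℝ) * Z⁻¹ + 0) θ with hF
        have hFconc : ConcaveOn ℝ (convexHull ℝ (entries x)) F :=
          (concave_min_inner v d Z⁻¹ 0 θ).subset (Set.subset_univ _) (convex_convexHull ℝ _)
        have hcv : ((α+β)⁻¹ • (α • y + β • v)) - v = ((α+β)⁻¹*(α*σ)) • d := by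
          rw [avg_sub α β hαβ.ne' y v, hσ, smul_smul, mul_assoc]
        have hrv : ((β+β)⁻¹ • (β • v + β • z)) - v = ((β+β)⁻¹*β) • d := by
          rw [avg_sub' β β hββ.ne' v z, ← hd]
        have hν1 : (α+β)⁻¹*(α*σ) ≤ 1 := by
          rw [inv_mul_le_iff₀ hαβ, mul_one]
          calc α*σ = σ/K := by rw [hαd]; ring
            _ ≤ (K+1)/(2*K) := by
                rw [div_le_div_iff₀ hKpos (by positivity)]
                nlinarith [sq_nonneg σ, sq_nonneg (σ-1)]
            _ = α + β := by rw [hαd, hβd]; field_simp; ring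
        have hFy : F y = θ := by
          rw [hF]; dsimp only; rw [keyy, add_zero]
          exact min_eq_right hθσ.le
        have hFz : F z = 1 := by
          rw [hF]; dsimp only; rw [keyz, add_zero]
          exact min_eq_left hθ1
        have hFc : F ((α+β)⁻¹ • (α • y + β • v)) = (α+β)⁻¹*(α*σ) := by
          rw [hF]; dsimp only; rw [key _ _ hcv, add_zero]
          exact min_eq_left (le_trans hν1 hθ1)
        have hFr : F ((β+β)⁻¹ • (β • v + β • z)) = (β+β)⁻¹*β := by
          rw [hF]; dsimp only; rw [key _ _ hrv, add_zero]
          apply min_eq_left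
          have : (β+β)⁻¹*β ≤ 1 := by
            rw [inv_mul_le_iff₀ hββ, mul_one]
            linarith
          linarith
        refine main α β β hα hβ hβ hsum ?_ F hFconc ?_
        · -- Q-condition (same as the σ < 0 case)
          rw [hyvZ, hvz, hαd, hβd]
          have hp1 : 0 < (1/K)+((K-1)/(2*K)) := by rw [← hαd, ← hβd]; exact hαβ
          have hp2 : 0 < ((K-1)/(2*K))+((K-1)/(2*K)) := by rw [← hβd]; exact hββ
          have e1 : (1/K)*((K-1)/(2*K))/((1/K)+((K-1)/(2*K))) = (K-1)/(K*(K+1)) := by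
            rw [div_eq_div_iff hp1.ne' (by positivity : (0:ℝ) < K*(K+1)).ne']
            field_simp
            ring
          have e2 : ((K-1)/(2*K))*((K-1)/(2*K))/(((K-1)/(2*K))+((K-1)/(2*K)))
              = (K-1)/(4*K) := by
            rw [div_eq_div_iff hp2.ne' (by positivity : (0:ℝ) < 4*K).ne']
            field_simp
            ring
          rw [e1, e2, div_mul_eq_mul_div, div_mul_eq_mul_div,
            div_le_div_iff₀ (by positivity) (by positivity)]
          have h4 : 4*σ^2 ≤ K + 1 := by nlinarith [sq_nonneg σ]
          nlinarith [mul_nonneg (mul_nonneg (mul_nonneg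
            (by linarith : (0:ℝ) ≤ K - 1) hKpos.le) hZpos.le)
            (by linarith : (0:ℝ) ≤ K + 1 - 4*σ^2)]
        · rw [hFy, hFr, hFc, hFz]
          have hc1 : (α+β) * ((α+β)⁻¹*(α*σ)) = α*σ := by
            rw [← mul_assoc, mul_inv_cancel₀ hαβ.ne', one_mul]
          have hc2 : (β+β) * ((β+β)⁻¹*β) = β := by
            rw [← mul_assoc, mul_inv_cancel₀ hββ.ne', one_mul]
          rw [hc1, hc2]
          have : α * θ < α * σ := by
            exact mul_lt_mul_of_pos_left hθσ hα
          linarith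
  · -- non-collinear case
    set A : ℝ := ‖y - v‖^2 with hA
    have hApos : 0 < A := pow_pos (norm_pos_iff.2 (sub_ne_zero.2 hyv)) 2
    set D : ℝ := Z + 16*A with hD
    have hDpos : 0 < D := by positivity
    set α : ℝ := Z/D with hαd
    set β : ℝ := 8*A/D with hβd
    have hα : 0 < α := by positivity
    have hβ : 0 < β := by positivity
    have hαβ : 0 < α + β := by linarith
    have hββ : 0 < β + β := by linarith
    have hsum : α + β + β = 1 := by rw [hαd, hβd]; field_simp; ring
    set G : EuclideanSpace ℝ (Fin m) → EuclideanSpace ℝ (Fin m) :=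
      fun u => u - ((inner ℝ u d : ℝ) * Z⁻¹) • d with hG
    have hGsmul : ∀ (t : ℝ) (u : EuclideanSpace ℝ (Fin m)), G (t • u) = t • G u := by
      intro t u
      rw [hG]; dsimp only
      rw [real_inner_smul_left]
      module
    have hGd : G d = 0 := by
      rw [hG]; dsimp only
      rw [real_inner_self_eq_norm_sq, ← hZ, mul_inv_cancel₀ hZpos.ne', one_smul, sub_self]
    set N : ℝ := ‖G (y - v)‖^2 with hN
    have hNpos : 0 < N := by
      apply pow_pos (norm_pos_iff.2 _) 2
      intro h0
      apply hcol
      refine ⟨(inner ℝ (y - v) d : ℝ) * Z⁻¹, ?_⟩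
      have := sub_eq_zero.1 (by rw [hG] at h0; exact h0)
      exact this
    set F : EuclideanSpace ℝ (Fin m) → ℝ := fun ζ => -‖G (ζ - v)‖^2 with hF
    have hFconc : ConcaveOn ℝ (convexHull ℝ (entries x)) F :=
      (concave_negsq_proj v d Z⁻¹).subset (Set.subset_univ _) (convex_convexHull ℝ _)
    have hcv : ((α+β)⁻¹ • (α • y + β • v)) - v = ((α+β)⁻¹*α) • (y - v) :=
      avg_sub α β hαβ.ne' y v
    have hrv : ((β+β)⁻¹ • (β • v + β • z)) - v = ((β+β)⁻¹*β) • d := by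
      rw [avg_sub' β β hββ.ne' v z, ← hd]
    have hFy : F y = -N := by rw [hF, hN]
    have hFz : F z = 0 := by
      rw [hF]; dsimp only
      rw [← hd, hGd]
      simp
    have hFr : F ((β+β)⁻¹ • (β • v + β • z)) = 0 := by
      rw [hF]; dsimp only
      rw [hrv, hGsmul, hGd, smul_zero]
      simp
    have hFc : F ((α+β)⁻¹ • (α • y + β • v)) = -(((α+β)⁻¹*α)^2 * N) := by
      rw [hF]; dsimp only
      rw [hcv, hGsmul, norm_smul, mul_pow, Real.norm_eq_abs, sq_abs, hN]
    refine main α β β hα hβ hβ hsum ?_ F hFconc ?_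
    · -- Q-condition
      rw [hvz, hαd, hβd]
      have hp1 : 0 < Z/D + 8*A/D := by rw [← hαd, ← hβd]; exact hαβ
      have hp2 : 0 < 8*A/D + 8*A/D := by rw [← hβd]; exact hββ
      have e1 : (Z/D)*(8*A/D)/((Z/D)+(8*A/D)) = 8*A*Z/(D*(Z+8*A)) := by
        rw [div_eq_div_iff hp1.ne' (by positivity : (0:ℝ) < D*(Z+8*A)).ne']
        field_simp
      have e2 : (8*A/D)*(8*A/D)/((8*A/D)+(8*A/D)) = 4*A/D := by
        rw [div_eq_div_iff hp2.ne' hDpos.ne']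
        field_simp
        ring
      rw [e1, e2, div_mul_eq_mul_div, div_mul_eq_mul_div,
        div_le_div_iff₀ (by positivity) (by positivity)]
      nlinarith [mul_nonneg (mul_nonneg (mul_nonneg hApos.le hApos.le) hZpos.le) hDpos.le,
        mul_pos (mul_pos hApos hZpos) hDpos]
    · rw [hFy, hFr, hFc, hFz]
      have hlam : (α+β)⁻¹*α < 1 := by
        rw [inv_mul_lt_iff₀ hαβ, mul_one]
        linarith
      have hlampos : 0 < (α+β)⁻¹*α := by positivity
      have hkey : (α+β) * (((α+β)⁻¹*α)^2 * N) < α * N := by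
        have h1 : (α+β) * (((α+β)⁻¹*α)^2 * N) = ((α+β)⁻¹*α) * (α * N) := by
          field_simp
        rw [h1]
        have h2 : 0 < α * N := mul_pos hα hNpos
        nlinarith
      nlinarith

/-- for a non-degenerate matrix `x` (at least three distinct
entries) that is not row-constant, with `Q(z) = −‖z‖²`, the statements (U1),
(U2), (U3) (as in Statement 18) and (UC) "`x` is column-constant" are all
equivalent. Moreover, if `x` is column-constant then for every weight matrix
`w` and every `F` concave on the convex hull of the entries,
`C_W(F) = E_W(F) ≤ R_W(F)`, and in particular `C_W(Q) ≤ R_W(Q)`. -/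
theorem stmt_19 [Nonempty I] [Nonempty J] (hm : 1 ≤ m)
    (x : I → J → EuclideanSpace ℝ (Fin m))
    (hnondeg : ∃ i₁ j₁ i₂ j₂ i₃ j₃,
      x i₁ j₁ ≠ x i₂ j₂ ∧ x i₁ j₁ ≠ x i₃ j₃ ∧ x i₂ j₂ ≠ x i₃ j₃)
    (hnotrow : ¬ ∀ (i : I) (j j' : J), x i j = x i j')
    (Q : EuclideanSpace ℝ (Fin m) → ℝ) (hQ : ∀ z, Q z = -‖z‖ ^ 2) :
    -- (U1) ↔ (U2)
    (((∀ w, IsWeight w → CW x w Q ≤ RW x w Q →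
        ∀ F : EuclideanSpace ℝ (Fin m) → ℝ,
          ConcaveOn ℝ (convexHull ℝ (entries x)) F → CW x w F ≤ RW x w F) ↔
     (∀ w, IsWeight w → CW x w Q ≤ RW x w Q → CW x w Q = EW x w Q)) ∧
    -- (U2) ↔ (U3)
    ((∀ w, IsWeight w → CW x w Q ≤ RW x w Q → CW x w Q = EW x w Q) ↔
     (∀ w, IsWeight w → CW x w Q ≤ RW x w Q →
        ∀ F : EuclideanSpace ℝ (Fin m) → ℝ,
          ConcaveOn ℝ (convexHull ℝ (entries x)) F →
          CW x w F = EW x w F ∧ EW x w F ≤ RW x w F)) ∧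
    -- (U1) ↔ (UC)
    ((∀ w, IsWeight w → CW x w Q ≤ RW x w Q →
        ∀ F : EuclideanSpace ℝ (Fin m) → ℝ,
          ConcaveOn ℝ (convexHull ℝ (entries x)) F → CW x w F ≤ RW x w F) ↔
     (∀ (i i' : I) (j : J), x i j = x i' j))) ∧
    -- moreover: (UC) implies the inequalities for every weight matrix
    ((∀ (i i' : I) (j : J), x i j = x i' j) →
      ∀ w, IsWeight w →
        (∀ F : EuclideanSpace ℝ (Fin m) → ℝ,
          ConcaveOn ℝ (convexHull ℝ (entries x)) F →
          CW x w F = EW x w F ∧ EW x w F ≤ RW x w F) ∧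
        CW x w Q ≤ RW x w Q) := by
  
  have hQeq : Q = fun z => -‖z‖ ^ 2 := funext hQ
  subst hQeq
  have hQconc : ConcaveOn ℝ (convexHull ℝ (entries x))
      (fun z : EuclideanSpace ℝ (Fin m) => -‖z‖ ^ 2) :=
    concave_Q.subset (Set.subset_univ _) (convex_convexHull ℝ _)
  -- the "moreover" part
  have M : (∀ (i i' : I) (j : J), x i j = x i' j) →
      ∀ w, IsWeight w →
        (∀ F : EuclideanSpace ℝ (Fin m) → ℝ,
          ConcaveOn ℝ (convexHull ℝ (entries x)) F →
          CW x w F = EW x w F ∧ EW x w F ≤ RW x w F) ∧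
        CW x w (fun z => -‖z‖ ^ 2) ≤ RW x w (fun z => -‖z‖ ^ 2) := by
    intro hUC w hw
    have hColC : WColConst x w := fun i i' j _ _ => hUC i i' j
    have h1 : ∀ F : EuclideanSpace ℝ (Fin m) → ℝ,
        ConcaveOn ℝ (convexHull ℝ (entries x)) F →
        CW x w F = EW x w F ∧ EW x w F ≤ RW x w F := fun F hF =>
      ⟨CW_eq_EW_of_wColConst hw.1 hColC F, EW_le_RW hw.1 hF⟩
    refine ⟨h1, ?_⟩
    obtain ⟨he, hle⟩ := h1 _ hQconc
    linarith
  -- (UC) → (U2)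
  have hU2ofUC : (∀ (i i' : I) (j : J), x i j = x i' j) →
      ∀ w, IsWeight w → CW x w (fun z => -‖z‖ ^ 2) ≤ RW x w (fun z => -‖z‖ ^ 2) →
        CW x w (fun z => -‖z‖ ^ 2) = EW x w (fun z => -‖z‖ ^ 2) :=
    fun hUC w hw _ => ((M hUC w hw).1 _ hQconc).1
  -- (U2) → (U3)
  have hU2impU3 : (∀ w, IsWeight w →
        CW x w (fun z => -‖z‖ ^ 2) ≤ RW x w (fun z => -‖z‖ ^ 2) →
        CW x w (fun z => -‖z‖ ^ 2) = EW x w (fun z => -‖z‖ ^ 2)) →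
      ∀ w, IsWeight w →
        CW x w (fun z => -‖z‖ ^ 2) ≤ RW x w (fun z => -‖z‖ ^ 2) →
        ∀ F : EuclideanSpace ℝ (Fin m) → ℝ,
          ConcaveOn ℝ (convexHull ℝ (entries x)) F →
          CW x w F = EW x w F ∧ EW x w F ≤ RW x w F := by
    intro h2 w hw hcond F hF
    have hcc := wColConst_of_CW_eq_EW hw.1 (h2 w hw hcond)
    exact ⟨CW_eq_EW_of_wColConst hw.1 hcc F, EW_le_RW hw.1 hF⟩
  -- (U3) → (U1)
  have hU3impU1 : (∀ w, IsWeight w →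
        CW x w (fun z => -‖z‖ ^ 2) ≤ RW x w (fun z => -‖z‖ ^ 2) →
        ∀ F : EuclideanSpace ℝ (Fin m) → ℝ,
          ConcaveOn ℝ (convexHull ℝ (entries x)) F →
          CW x w F = EW x w F ∧ EW x w F ≤ RW x w F) →
      ∀ w, IsWeight w →
        CW x w (fun z => -‖z‖ ^ 2) ≤ RW x w (fun z => -‖z‖ ^ 2) →
        ∀ F : EuclideanSpace ℝ (Fin m) → ℝ,
          ConcaveOn ℝ (convexHull ℝ (entries x)) F → CW x w F ≤ RW x w F := by
    intro h3 w hw hc F hF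
    obtain ⟨h1, h2⟩ := h3 w hw hc F hF
    linarith
  -- (U1) → (UC)
  have hU1impUC : (∀ w, IsWeight w →
        CW x w (fun z => -‖z‖ ^ 2) ≤ RW x w (fun z => -‖z‖ ^ 2) →
        ∀ F : EuclideanSpace ℝ (Fin m) → ℝ,
          ConcaveOn ℝ (convexHull ℝ (entries x)) F → CW x w F ≤ RW x w F) →
      ∀ (i i' : I) (j : J), x i j = x i' j := by
    intro h1
    by_contra hnotcol
    obtain ⟨i₁, i₂, j₁, j₂, hyv, hzv, hyz⟩ := exists_goodL x hnondeg hnotrow hnotcol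
    obtain ⟨w, hw, hcond, F, hF, hlt⟩ := exists_violation x hyv hzv hyz
    exact absurd (h1 w hw hcond F hF) (not_le.2 hlt)
  refine ⟨⟨?_, ?_, ?_⟩, M⟩
  · exact ⟨fun h1 => hU2ofUC (hU1impUC h1), fun h2 => hU3impU1 (hU2impU3 h2)⟩
  · exact ⟨hU2impU3, fun h3 w hw hc => (h3 w hw hc _ hQconc).1⟩
  · exact ⟨hU1impUC, fun hUC => hU3impU1 (hU2impU3 (hU2ofUC hUC))⟩
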